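/- If H ⊑ H' and both H and H' are sequential histories of the same length, and each operation identifier occurs exactly once as an invocation immediately followed by its matching response, then the happened-before order on operations in H equals that in H'; in particular if the happened-before order on operations of H is total, then H = H'. -/

import Mathlib

/-!
In a sequential history each pair of adjacent events is either an invocation followed by its
matching response, or a response followed by an invocation. The bijection `ν` witnessing
`H ⊑ H'` keeps pairs of the second kind in order by definition, and maps pairs of the first
kind to adjacent positions because `H'` is sequential too. Hence `ν` is strictly monotone,
so it is the identity and `H = H'`; both claims follow.
-/

structure Event where
  thr : ℕ
  op : ℕ
  isInv : Bool
deriving DecidableEq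

abbrev History := List Event

/-- Projection of a history to the events of thread `t`. -/
def proj (H : History) (t : ℕ) : History := H.filter (fun e => e.thr = t)

/-- The linearizability relation on histories. -/
def Lin (H H' : History) : Prop :=
  (∀ t, proj H t = proj H' t) ∧
  ∃ ν : Fin H.length ≃ Fin H'.length,
    (∀ i, H.get i = H'.get (ν i)) ∧
    ∀ i j : Fin H.length, (i : ℕ) < (j : ℕ) →
      (H.get i).isInv = false → (H.get j).isInv = true →
      ((ν i : ℕ) < ((ν j : ℕ)))

/-- Operation `o` happens before `o'` in `H`: some response event of `o`
precedes some invocation event of `o'`. -/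
def hb (H : History) (o o' : ℕ) : Prop :=
  ∃ i j : Fin H.length, (i : ℕ) < (j : ℕ) ∧
    (H.get i).op = o ∧ (H.get i).isInv = false ∧
    (H.get j).op = o' ∧ (H.get j).isInv = true

/-- `o` is an operation occurring in `H`. -/
def opOf (H : History) (o : ℕ) : Prop := ∃ i : Fin H.length, (H.get i).op = o

/-- A complete sequential history: even length, events alternate
invocation / matching response, and operation identifiers are distinct. -/
def SeqHist (H : History) : Prop :=
  (∃ n, H.length = 2 * n) ∧
  (∀ (k : ℕ) (h1 : 2 * k < H.length) (h2 : 2 * k + 1 < H.length),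
    (H.get ⟨2 * k, h1⟩).isInv = true ∧ (H.get ⟨2 * k + 1, h2⟩).isInv = false ∧
    (H.get ⟨2 * k, h1⟩).op = (H.get ⟨2 * k + 1, h2⟩).op) ∧
  (∀ i j : Fin H.length, (H.get i).op = (H.get j).op →
    (H.get i).isInv = (H.get j).isInv → i = j)

theorem Fin.strictMono_of_lt_of_val_eq_add_one {n : ℕ} {α : Type*} [Preorder α]
    {f : Fin n → α} (hf : ∀ i j : Fin n, (j : ℕ) = i + 1 → f i < f j) : StrictMono f := by
  cases n with
  | zero => exact fun i => i.elim0
  | succ n => exact Fin.strictMono_iff_lt_succ.2 fun i => hf _ _ rfl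

theorem List.eq_of_strictMono_equiv_get {α : Type*} {l l' : List α}
    (ν : Fin l.length ≃ Fin l'.length) (hν : StrictMono ν)
    (hget : ∀ i, l.get i = l'.get (ν i)) : l = l' := by
  have hval : ∀ i, (ν i : ℕ) = i :=
    Fin.coe_orderIso_apply (hν.orderIsoOfSurjective ν ν.surjective)
  refine List.ext_get (Fin.equiv_iff_eq.1 ⟨ν⟩) fun n h h' => ?_
  exact (hget ⟨n, h⟩).trans (congrArg l'.get (Fin.ext (hval _)))

namespace SeqHist

variable {H : History}

theorem isInv_iff_even (hs : SeqHist H) (i : Fin H.length) :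
    (H.get i).isInv = true ↔ Even (i : ℕ) := by
  obtain ⟨⟨n, hn⟩, halt, -⟩ := hs
  obtain ⟨i, hi⟩ := i
  obtain ⟨k, rfl | rfl⟩ := Nat.even_or_odd' i
  · exact iff_of_true (halt k hi (by omega)).1 (even_two_mul k)
  · refine iff_of_false ?_ (Nat.not_even_bit1 k)
    rw [(halt k (by omega) hi).2.1]
    exact Bool.false_ne_true

theorem isInv_eq_false_iff_odd (hs : SeqHist H) (i : Fin H.length) :
    (H.get i).isInv = false ↔ Odd (i : ℕ) := by
  rw [← Nat.not_even_iff_odd, ← hs.isInv_iff_even, Bool.not_eq_true]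

theorem op_eq_of_even (hs : SeqHist H) {i j : Fin H.length} (hi : Even (i : ℕ))
    (hj : (j : ℕ) = i + 1) : (H.get i).op = (H.get j).op := by
  obtain ⟨-, halt, -⟩ := hs
  obtain ⟨i, hi'⟩ := i
  obtain ⟨j, hj'⟩ := j
  obtain ⟨k, rfl⟩ := hi.two_dvd
  subst hj
  exact (halt k hi' hj').2.2

theorem val_eq_add_one_of_op_eq (hs : SeqHist H) {p q : Fin H.length}
    (hop : (H.get p).op = (H.get q).op)
    (hp : (H.get p).isInv = true) (hq : (H.get q).isInv = false) :
    (q : ℕ) = p + 1 := by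
  obtain ⟨k, hk⟩ := (hs.isInv_eq_false_iff_odd q).1 hq
  let p' : Fin H.length := ⟨2 * k, by omega⟩
  have hp'_even : Even (p' : ℕ) := even_two_mul k
  have hp' : p' = p := hs.2.2 p' p
    (by rw [hs.op_eq_of_even (j := q) hp'_even hk, hop])
    (by rw [hp, hs.isInv_iff_even]; exact hp'_even)
  rw [hk, ← hp']

end SeqHist

theorem Lin.eq_of_seqHist {H H' : History} (h : Lin H H') (hs : SeqHist H)
    (hs' : SeqHist H') : H = H' := by
  obtain ⟨-, ν, hget, hord⟩ := h
  refine List.eq_of_strictMono_equiv_get ν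
    (Fin.strictMono_of_lt_of_val_eq_add_one fun i j hij => ?_) hget
  rcases Nat.even_or_odd (i : ℕ) with hi | hi
  · have hj : Odd (j : ℕ) := hij ▸ hi.add_one
    rw [Fin.lt_def, hs'.val_eq_add_one_of_op_eq (p := ν i) (q := ν j)]
    · exact Nat.lt_add_one _
    · rw [← hget, ← hget, hs.op_eq_of_even hi hij]
    · rw [← hget, hs.isInv_iff_even]; exact hi
    · rw [← hget, hs.isInv_eq_false_iff_odd]; exact hj
  · have hj : Even (j : ℕ) := hij ▸ hi.add_one
    exact hord i j (by omega) ((hs.isInv_eq_false_iff_odd i).2 hi) ((hs.isInv_iff_even j).2 hj)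

theorem lin_seq_hb_eq_general (H H' : History) (h : Lin H H')
    (hs : SeqHist H) (hs' : SeqHist H') :
    (∀ o o', hb H o o' ↔ hb H' o o') ∧
    ((∀ o o', opOf H o → opOf H o' → o ≠ o' → hb H o o' ∨ hb H o' o) → H = H') := by
  obtain rfl := h.eq_of_seqHist hs hs'
  exact ⟨fun _ _ => Iff.rfl, fun _ => rfl⟩

/-- For sequential histories related by linearizability, the happened-before
orders coincide; if moreover the happened-before order of `H` is total, `H = H'`. -/
theorem lin_seq_hb_eq (H H' : History) (h : Lin H H')
    (hs : SeqHist H) (hs' : SeqHist H') (hlen : H.length = H'.length) :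
    (∀ o o', hb H o o' ↔ hb H' o o') ∧
    ((∀ o o', opOf H o → opOf H o' → o ≠ o' → hb H o o' ∨ hb H o' o) → H = H') :=
  lin_seq_hb_eq_general H H' h hs hs'
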